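/- For every base SL-FL formula α, store s, and heaplet h: if S = Supp(α, s, h) ≠ ⊥, then Supp(α, s, h↾S) = S. -/

import Mathlib

/-!
# Base SL-FL (determined-heaplet separation logic)

Locations `Loc` with a distinguished `nil`, field names `F`, variables `Var`.
A heaplet is a domain `dom ⊆ Loc \ {nil}` together with, for each field, a function
defined on the domain (extended by `nil` outside the domain, so that heaplets with the
same domain and the same field values on the domain are equal).
-/

namespace SLFL

open scoped Classical

/-- A heaplet: a domain of locations (not containing `nil`) together with a value for
each field at each location of the domain.  Outside the domain the maps are required to
take the junk value `nil`, so that heaplets are determined by their domain and their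
field values on the domain. -/
structure Heaplet (Loc F : Type) (nil : Loc) where
  dom : Set Loc
  map : F → Loc → Loc
  nil_not_mem : nil ∉ dom
  map_outside : ∀ f l, l ∉ dom → map f l = nil

variable {Loc F Var : Type} {nil : Loc}

/-- The restriction `h↾S`: the heaplet with domain `S ∩ dom h` and fields restricted
accordingly. -/
noncomputable def Heaplet.restrict (h : Heaplet Loc F nil) (S : Set Loc) :
    Heaplet Loc F nil where
  dom := S ∩ h.dom
  map := fun f l => if l ∈ S ∩ h.dom then h.map f l else nil
  nil_not_mem := fun hc => h.nil_not_mem hc.2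
  map_outside := fun f l hl => by simp [hl]

/-- `Agrees h' h S`: the heaplet `h'` agrees with `h` on the set `S`. -/
def Agrees (h' h : Heaplet Loc F nil) (S : Set Loc) : Prop :=
  S ⊆ h.dom ∧ S ⊆ h'.dom ∧ ∀ f : F, ∀ u ∈ S, h'.map f u = h.map f u

/-- `Subheaplet h' h`: `h'` is a subheaplet of `h`. -/
def Subheaplet (h' h : Heaplet Loc F nil) : Prop :=
  h'.dom ⊆ h.dom ∧ Agrees h h' h'.dom

/-- Formulas of the base SL-FL logic: heap-independent formulas, points-to atoms,
guarded existentials `∃y.(x ↦_f y : α)`, conditionals, conjunction, overlapping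
conjunction `∧∧`, disjunction, and separating conjunction `⋆`. -/
inductive Fml (Var F Loc : Type) : Type _ where
  | pure (δ : (Var → Loc) → Prop)
  | pointsTo (x : Var) (f : F) (y : Var)
  | exGuard (y x : Var) (f : F) (α : Fml Var F Loc)
  | ite (γ α β : Fml Var F Loc)
  | and (α β : Fml Var F Loc)
  | oand (α β : Fml Var F Loc)
  | or (α β : Fml Var F Loc)
  | star (α β : Fml Var F Loc)

/-- Union of two partial sets of locations (`none` plays the role of `⊥`). -/
def union2 : Option (Set Loc) → Option (Set Loc) → Option (Set Loc)
  | some a, some b => some (a ∪ b)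
  | _, _ => none

mutual
/-- The partial support `Supp(α, s, h)`; `none` is `⊥`. -/
noncomputable def Supp : Fml Var F Loc → (Var → Loc) → Heaplet Loc F nil → Option (Set Loc)
  | .pure _, _, _ => some (∅ : Set Loc)
  | .pointsTo x _ _, s, h => if s x ∈ h.dom then some {s x} else none
  | .exGuard y x f α, s, h =>
      if s x ∈ h.dom then
        match Supp α (Function.update s y (h.map f (s x))) h with
        | some S => some ({s x} ∪ S)
        | none => none
      else none
  | .ite γ α β, s, h =>
      match Supp γ s h with
      | none => none
      | some Sγ =>
        if Sat γ s (h.restrict Sγ) then (Supp α s h).map fun Sα => Sγ ∪ Sα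
        else (Supp β s h).map fun Sβ => Sγ ∪ Sβ
  | .and α β, s, h => union2 (Supp α s h) (Supp β s h)
  | .oand α β, s, h => union2 (Supp α s h) (Supp β s h)
  | .or α β, s, h => union2 (Supp α s h) (Supp β s h)
  | .star α β, s, h => union2 (Supp α s h) (Supp β s h)

/-- Satisfaction `(s, h) ⊨ α`. -/
noncomputable def Sat : Fml Var F Loc → (Var → Loc) → Heaplet Loc F nil → Prop
  | .pure δ, s, h => δ s ∧ h.dom = ∅
  | .pointsTo x f y, s, h => h.dom = {s x} ∧ h.map f (s x) = s y
  | .exGuard y x f α, s, h =>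
      s x ∈ h.dom ∧
        ∃ S, Supp α (Function.update s y (h.map f (s x))) h = some S ∧
          h.dom = {s x} ∪ S ∧
          Sat α (Function.update s y (h.map f (s x))) (h.restrict S)
  | .ite γ α β, s, h =>
      ∃ Sγ, Supp γ s h = some Sγ ∧
        ((Sat γ s (h.restrict Sγ) ∧
            ∃ Sα, Supp α s h = some Sα ∧ h.dom = Sγ ∪ Sα ∧ Sat α s (h.restrict Sα)) ∨
         (¬ Sat γ s (h.restrict Sγ) ∧
            ∃ Sβ, Supp β s h = some Sβ ∧ h.dom = Sγ ∪ Sβ ∧ Sat β s (h.restrict Sβ)))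
  | .and α β, s, h => Sat α s h ∧ Sat β s h
  | .oand α β, s, h =>
      ∃ Sα Sβ, Supp α s h = some Sα ∧ Supp β s h = some Sβ ∧
        h.dom = Sα ∪ Sβ ∧ Sat α s (h.restrict Sα) ∧ Sat β s (h.restrict Sβ)
  | .or α β, s, h =>
      ∃ Sα Sβ, Supp α s h = some Sα ∧ Supp β s h = some Sβ ∧
        h.dom = Sα ∪ Sβ ∧ (Sat α s (h.restrict Sα) ∨ Sat β s (h.restrict Sβ))
  | .star α β, s, h =>
      ∃ h₁ h₂ : Heaplet Loc F nil, Subheaplet h₁ h ∧ Subheaplet h₂ h ∧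
        Disjoint h₁.dom h₂.dom ∧ h.dom = h₁.dom ∪ h₂.dom ∧ Sat α s h₁ ∧ Sat β s h₂
end

/-!
The support of a formula only inspects the heaplet at locations that end up in the support
(the guard of a conditional is evaluated on the restriction to the guard's own support). Hence
any heaplet agreeing with `h` on `S = Supp(α, s, h)` has the same support, and `h↾S` is one.
-/

theorem Heaplet.ext_of_dom_eq {h₁ h₂ : Heaplet Loc F nil} (hdom : h₁.dom = h₂.dom)
    (hmap : ∀ f, ∀ u ∈ h₁.dom, h₁.map f u = h₂.map f u) : h₁ = h₂ := by
  obtain ⟨d₁, m₁, n₁, o₁⟩ := h₁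
  obtain ⟨d₂, m₂, n₂, o₂⟩ := h₂
  obtain rfl : d₁ = d₂ := hdom
  obtain rfl : m₁ = m₂ := by
    funext f u
    by_cases hu : u ∈ d₁
    · exact hmap f u hu
    · rw [o₁ f u hu, o₂ f u hu]
  rfl

theorem Agrees.mono {h' h : Heaplet Loc F nil} {S T : Set Loc} (hag : Agrees h' h S)
    (hTS : T ⊆ S) : Agrees h' h T :=
  ⟨hTS.trans hag.1, hTS.trans hag.2.1, fun f u hu => hag.2.2 f u (hTS hu)⟩

theorem Agrees.restrict_eq {h' h : Heaplet Loc F nil} {S : Set Loc} (hag : Agrees h' h S) :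
    h'.restrict S = h.restrict S := by
  obtain ⟨hS, hS', hmap⟩ := hag
  refine Heaplet.ext_of_dom_eq ?_ fun f u hu => ?_
  · simp only [Heaplet.restrict, Set.inter_eq_left.2 hS, Set.inter_eq_left.2 hS']
  · obtain hu : u ∈ S ∩ h'.dom := hu
    simp only [Heaplet.restrict, if_pos hu, if_pos (show u ∈ S ∩ h.dom from ⟨hu.1, hS hu.1⟩)]
    exact hmap f u hu.1

theorem agrees_restrict {h : Heaplet Loc F nil} {S : Set Loc} (hS : S ⊆ h.dom) :
    Agrees (h.restrict S) h S := by
  refine ⟨hS, fun u hu => ⟨hu, hS hu⟩, fun f u hu => ?_⟩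
  simp [Heaplet.restrict, hu, hS hu]

theorem union2_eq_some {a b : Option (Set Loc)} {S : Set Loc} :
    union2 a b = some S ↔ ∃ A B, a = some A ∧ b = some B ∧ S = A ∪ B := by
  cases a <;> cases b <;> simp [union2, eq_comm]

section Supp

variable {s : Var → Loc} {h : Heaplet Loc F nil} {S : Set Loc}

theorem supp_pointsTo_eq_some {x y : Var} {f : F} :
    Supp (.pointsTo x f y) s h = some S ↔ s x ∈ h.dom ∧ S = {s x} := by
  simp only [Supp]
  split_ifs with hx <;> simp [hx, eq_comm]

theorem supp_exGuard_eq_some {x y : Var} {f : F} {α : Fml Var F Loc} :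
    Supp (.exGuard y x f α) s h = some S ↔ s x ∈ h.dom ∧
      ∃ S', Supp α (Function.update s y (h.map f (s x))) h = some S' ∧ S = {s x} ∪ S' := by
  simp only [Supp]
  split_ifs with hx
  · cases Supp α (Function.update s y (h.map f (s x))) h <;> simp [hx, eq_comm]
  · simp [hx]

theorem supp_ite_eq_some {γ α β : Fml Var F Loc} :
    Supp (.ite γ α β) s h = some S ↔ ∃ Sγ, Supp γ s h = some Sγ ∧
      ∃ S', Supp (if Sat γ s (h.restrict Sγ) then α else β) s h = some S' ∧ S = Sγ ∪ S' := by
  simp only [Supp]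
  cases Supp γ s h with
  | none => simp
  | some Sγ =>
    simp only [Option.some.injEq, exists_eq_left']
    split_ifs <;> cases Supp _ s h <;> simp [eq_comm]

theorem supp_subset_dom {α : Fml Var F Loc} (hS : Supp α s h = some S) : S ⊆ h.dom := by
  induction α generalizing s S with
  | pure =>
    obtain rfl : ∅ = S := by simpa [Supp] using hS
    exact Set.empty_subset _
  | pointsTo =>
    obtain ⟨hx, rfl⟩ := supp_pointsTo_eq_some.1 hS
    simpa using hx
  | exGuard y x f α ih =>
    obtain ⟨hx, S', hS', rfl⟩ := supp_exGuard_eq_some.1 hS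
    exact Set.union_subset (by simpa using hx) (ih hS')
  | ite γ α β ihγ ihα ihβ =>
    obtain ⟨Sγ, hSγ, S', hS', rfl⟩ := supp_ite_eq_some.1 hS
    refine Set.union_subset (ihγ hSγ) ?_
    split_ifs at hS'
    exacts [ihα hS', ihβ hS']
  | and α β ihα ihβ | oand α β ihα ihβ | or α β ihα ihβ | star α β ihα ihβ =>
    simp only [Supp] at hS
    obtain ⟨A, B, hA, hB, rfl⟩ := union2_eq_some.1 hS
    exact Set.union_subset (ihα hA) (ihβ hB)

theorem supp_eq_of_agrees {α : Fml Var F Loc} {h' : Heaplet Loc F nil}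
    (hS : Supp α s h = some S) (hag : Agrees h' h S) : Supp α s h' = some S := by
  induction α generalizing s S with
  | pure => simpa [Supp] using hS
  | pointsTo =>
    obtain ⟨-, rfl⟩ := supp_pointsTo_eq_some.1 hS
    exact supp_pointsTo_eq_some.2 ⟨hag.2.1 rfl, rfl⟩
  | exGuard y x f α ih =>
    obtain ⟨-, S', hS', rfl⟩ := supp_exGuard_eq_some.1 hS
    have hx : s x ∈ {s x} ∪ S' := Or.inl rfl
    refine supp_exGuard_eq_some.2 ⟨hag.2.1 hx, S', ?_, rfl⟩
    rw [hag.2.2 f _ hx]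
    exact ih hS' (hag.mono Set.subset_union_right)
  | ite γ α β ihγ ihα ihβ =>
    obtain ⟨Sγ, hSγ, S', hS', rfl⟩ := supp_ite_eq_some.1 hS
    have hagγ := hag.mono Set.subset_union_left
    have hag' := hag.mono Set.subset_union_right
    refine supp_ite_eq_some.2 ⟨Sγ, ihγ hSγ hagγ, S', ?_, rfl⟩
    rw [hagγ.restrict_eq]
    split_ifs at hS' ⊢
    exacts [ihα hS' hag', ihβ hS' hag']
  | and α β ihα ihβ | oand α β ihα ihβ | or α β ihα ihβ | star α β ihα ihβ =>
    simp only [Supp] at hS ⊢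
    obtain ⟨A, B, hA, hB, rfl⟩ := union2_eq_some.1 hS
    exact union2_eq_some.2 ⟨A, B, ihα hA (hag.mono Set.subset_union_left),
      ihβ hB (hag.mono Set.subset_union_right), rfl⟩

end Supp

end SLFL

open SLFL in
/-- For every base SL-FL formula `α`, store `s`, and heaplet `h`:
if `S = Supp(α, s, h) ≠ ⊥`, then `Supp(α, s, h↾S) = S`. -/
theorem supp_restrict {Loc F Var : Type} {nil : Loc}
    (α : Fml Var F Loc) (s : Var → Loc) (h : Heaplet Loc F nil) (S : Set Loc)
    (hS : Supp (nil := nil) α s h = some S) :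
    Supp (nil := nil) α s (h.restrict S) = some S :=
  supp_eq_of_agrees hS (agrees_restrict (supp_subset_dom hS))
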